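/- For every nonempty countable set σ, the space 𝐋_σ is an interior image of 𝐋₂: there exists a surjective map from L₂ onto L_σ that is continuous and open with respect to the Scott topologies. -/

import Mathlib

/-!
Decode a binary sequence block by block: the `n`-th output symbol is `e i`, where `i` is the
position of the `n`-th `false` and `e : ℕ → σ` takes every value infinitely often. Each output
symbol only depends on a finite prefix of the input, which gives Scott continuity. The up-sets of
finite sequences form a basis of the Scott topology, so openness reduces to showing that the
decoding maps the up-set of a finite `y` onto the up-set of its image; an extension of the image
is realized by appending `true`s and placing `false`s at positions beyond `y` where `e` takes the
required values.
-/

open Set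

/-- Finite and infinite `σ`-valued sequences, encoded as functions `ℕ → Option σ` whose
domain of definition is an initial segment of `ℕ`. -/
structure Lgen (σ : Type*) where
  toFun : ℕ → Option σ
  init : ∀ n, toFun (n + 1) ≠ none → toFun n ≠ none

/-- The initial-segment (prefix) partial order on `Lgen σ`. -/
instance Lgen.instPartialOrder {σ : Type*} : PartialOrder (Lgen σ) where
  le f g := ∀ (n : ℕ) (s : σ), f.toFun n = some s → g.toFun n = some s
  le_refl f n s h := h
  le_trans f g h hfg hgh n s hs := hgh n s (hfg n s hs)
  le_antisymm f g hfg hgf := by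
    obtain ⟨ff, hf⟩ := f
    obtain ⟨gf, hg⟩ := g
    have hfun : ff = gf := by
      funext n
      cases hfn : ff n with
      | some s =>
        have h2 : gf n = some s := hfg n s hfn
        exact h2.symm
      | none =>
        cases hgn : gf n with
        | some s =>
          have h2 : ff n = some s := hgf n s hgn
          rw [hfn] at h2
          exact absurd h2 (by simp)
        | none => rfl
    subst hfun
    rfl

/-- The finite sequence given by a list, as an element of `Lgen σ`. -/
def Lgen.ofList {σ : Type*} (l : List σ) : Lgen σ where
  toFun n := l[n]?
  init n h := by
    simp only [ne_eq, List.getElem?_eq_none_iff, not_le] at h ⊢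
    omega

/-- The infinite binary tree with limits `L₂`: finite and infinite binary sequences with the
initial-segment order. -/
abbrev L2 : Type := Lgen Bool

/-- The Scott topology of a preorder: opens are the upper sets `U` such that every nonempty
directed set whose least upper bound lies in `U` meets `U`. -/
def scottTopology (α : Type*) [Preorder α] : TopologicalSpace α where
  IsOpen U := IsUpperSet U ∧ ∀ d : Set α, d.Nonempty → DirectedOn (· ≤ ·) d →
      ∀ x, IsLUB d x → x ∈ U → (d ∩ U).Nonempty
  isOpen_univ := ⟨isUpperSet_univ, fun d hd _ _ _ _ => hd.imp fun y hy => ⟨hy, mem_univ y⟩⟩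
  isOpen_inter := by
    rintro U V ⟨hU1, hU2⟩ ⟨hV1, hV2⟩
    refine ⟨hU1.inter hV1, fun d hdne hdir x hlub hx => ?_⟩
    obtain ⟨a, ha, haU⟩ := hU2 d hdne hdir x hlub hx.1
    obtain ⟨b, hb, hbV⟩ := hV2 d hdne hdir x hlub hx.2
    obtain ⟨c, hc, hac, hbc⟩ := hdir a ha b hb
    exact ⟨c, hc, hU1 hac haU, hV1 hbc hbV⟩
  isOpen_sUnion := by
    intro S hS
    refine ⟨fun a b hab ha => ?_, fun d hdne hdir x hlub hx => ?_⟩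
    · obtain ⟨U, hU, haU⟩ := ha
      exact ⟨U, hU, (hS U hU).1 hab haU⟩
    · obtain ⟨U, hU, hxU⟩ := hx
      obtain ⟨a, ha, haU⟩ := (hS U hU).2 d hdne hdir x hlub hxU
      exact ⟨a, ha, U, hU, haU⟩

/-- Each poset `L_σ` of finite and infinite `σ`-valued sequences carries the Scott topology. -/
instance {σ : Type*} : TopologicalSpace (Lgen σ) := scottTopology (Lgen σ)

open Filter Topology

namespace Lgen

variable {σ : Type*}

theorem toFun_ne_none_of_le {x : Lgen σ} {m n : ℕ} (hmn : m ≤ n) (hn : x.toFun n ≠ none) :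
    x.toFun m ≠ none := by
  induction n, hmn using Nat.le_induction with
  | base => exact hn
  | succ n _ ih => exact ih (x.init n hn)

theorem toFun_eq_of_le {x z : Lgen σ} (hxz : x ≤ z) {j : ℕ} (hj : x.toFun j ≠ none) :
    z.toFun j = x.toFun j := by
  obtain ⟨s, hs⟩ := Option.ne_none_iff_exists'.mp hj
  rw [hs, hxz j s hs]

def ofFun (f : ℕ → σ) : Lgen σ where
  toFun n := some (f n)
  init _ _ := Option.some_ne_none _

def trunc (x : Lgen σ) (n : ℕ) : Lgen σ where
  toFun i := if i < n then x.toFun i else none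
  init i hi := by
    by_cases h : i + 1 < n
    · rw [if_pos h] at hi
      rw [if_pos (by omega)]
      exact x.init i hi
    · exact absurd (if_neg h) hi

theorem trunc_toFun_of_lt {x : Lgen σ} {n i : ℕ} (h : i < n) : (x.trunc n).toFun i = x.toFun i :=
  if_pos h

theorem trunc_toFun_of_le {x : Lgen σ} {n i : ℕ} (h : n ≤ i) : (x.trunc n).toFun i = none :=
  if_neg (by omega)

theorem trunc_le (x : Lgen σ) (n : ℕ) : x.trunc n ≤ x := fun i s hs => by
  by_cases h : i < n
  · rwa [trunc_toFun_of_lt h] at hs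
  · rw [trunc_toFun_of_le (not_lt.mp h)] at hs
    exact absurd hs (Option.some_ne_none s).symm

theorem monotone_trunc (x : Lgen σ) : Monotone x.trunc := fun m n hmn i s hs => by
  by_cases h : i < m
  · rwa [trunc_toFun_of_lt (h.trans_le hmn), ← trunc_toFun_of_lt h]
  · rw [trunc_toFun_of_le (not_lt.mp h)] at hs
    exact absurd hs (Option.some_ne_none s).symm

theorem isLUB_range_trunc (x : Lgen σ) : IsLUB (range x.trunc) x :=
  ⟨forall_mem_range.mpr x.trunc_le, fun _ hv i s hs =>
    hv (mem_range_self (i + 1)) i s (by rwa [trunc_toFun_of_lt (Nat.lt_succ_self i)])⟩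

def IsFinite (x : Lgen σ) : Prop := ∃ n, x.toFun n = none

theorem isFinite_trunc (x : Lgen σ) (n : ℕ) : (x.trunc n).IsFinite :=
  ⟨n, trunc_toFun_of_le le_rfl⟩

theorem isFinite_ofList (l : List σ) : (Lgen.ofList l).IsFinite :=
  ⟨l.length, List.getElem?_eq_none le_rfl⟩

theorem exists_mem_toFun_eq_of_isLUB {d : Set (Lgen σ)} {x : Lgen σ} (hx : IsLUB d x) {n : ℕ}
    {s : σ} (hs : x.toFun n = some s) : ∃ z ∈ d, z.toFun n = some s := by
  by_contra! hd
  suffices x ≤ x.trunc n by simpa [trunc_toFun_of_le le_rfl] using this n s hs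
  refine hx.2 fun z hz i t ht => ?_
  have hzn : z.toFun n = none := by
    by_contra hzn
    obtain ⟨u, hu⟩ := Option.ne_none_iff_exists'.mp hzn
    exact hd z hz (by rw [hu, ← hs, hx.1 hz n u hu])
  have hi : i < n := by
    by_contra! hi
    exact toFun_ne_none_of_le hi (by simp [ht]) hzn
  rw [trunc_toFun_of_lt hi]
  exact hx.1 hz i t ht

theorem exists_mem_le_of_isLUB {d : Set (Lgen σ)} (hne : d.Nonempty)
    (hdir : DirectedOn (· ≤ ·) d) {x y : Lgen σ} (hx : IsLUB d x) (hy : y.IsFinite) (hyx : y ≤ x) :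
    ∃ z ∈ d, y ≤ z := by
  obtain ⟨m, hm⟩ := hy
  suffices ∀ k, ∃ z ∈ d, ∀ j < k, ∀ s, y.toFun j = some s → z.toFun j = some s by
    obtain ⟨z, hz, hyz⟩ := this m
    refine ⟨z, hz, fun j s hs => hyz j ?_ s hs⟩
    by_contra! hj
    exact toFun_ne_none_of_le hj (by simp [hs]) hm
  intro k
  induction k with
  | zero => exact hne.imp fun z hz => ⟨hz, fun j hj => absurd hj j.not_lt_zero⟩
  | succ k ih =>
    obtain ⟨z, hz, hzk⟩ := ih
    cases hk : y.toFun k with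
    | none =>
      refine ⟨z, hz, fun j hj s hs => hzk j ?_ s hs⟩
      rcases Nat.lt_succ_iff_lt_or_eq.mp hj with hj | rfl
      · exact hj
      · simp [hk] at hs
    | some s =>
      obtain ⟨z', hz', hz's⟩ := exists_mem_toFun_eq_of_isLUB hx (hyx k s hk)
      obtain ⟨v, hv, hzv, hz'v⟩ := hdir z hz z' hz'
      refine ⟨v, hv, fun j hj t ht => ?_⟩
      rcases Nat.lt_succ_iff_lt_or_eq.mp hj with hj | rfl
      · exact hzv j t (hzk j hj t ht)
      · rw [hk] at ht
        exact ht ▸ hz'v j s hz's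

instance : IsScott (Lgen σ) univ where
  topology_eq_scott := by
    ext U
    change IsUpperSet U ∧ DirSupInacc U ↔ @IsOpen _ (scott (Lgen σ) univ) U
    rw [← dirSupInaccOn_univ]
    exact (IsScott.isOpen_iff_isUpperSet_and_dirSupInaccOn
      (α := WithScott (Lgen σ)) (D := univ) (s := U)).symm

theorem isOpen_Ici {y : Lgen σ} (hy : y.IsFinite) : IsOpen (Ici y) :=
  (IsScott.isOpen_iff_isUpperSet_and_dirSupInaccOn (D := univ)).2
    ⟨isUpperSet_Ici y, fun _ _ hne hdir _ hx hyx => exists_mem_le_of_isLUB hne hdir hx hy hyx⟩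

theorem isTopologicalBasis_Ici :
    TopologicalSpace.IsTopologicalBasis (Ici '' {y : Lgen σ | y.IsFinite}) := by
  refine TopologicalSpace.isTopologicalBasis_of_isOpen_of_nhds ?_ fun x U hx hU => ?_
  · rintro _ ⟨y, hy, rfl⟩
    exact isOpen_Ici hy
  · obtain ⟨-, ⟨n, rfl⟩, hn⟩ := (IsScott.isOpen_iff_isUpperSet_and_dirSupInaccOn (D := univ)).1
      hU |>.2 trivial (range_nonempty _) (monotone_trunc x).directed_le.directedOn_range
      (isLUB_range_trunc x) hx
    exact ⟨_, mem_image_of_mem _ (isFinite_trunc x n), trunc_le x n,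
      (IsScott.isUpperSet_of_isOpen (D := univ) hU).Ici_subset hn⟩

theorem continuous_of_monotone_of_finitary {τ : Type*} {f : Lgen τ → Lgen σ} (hf : Monotone f)
    (hfin : ∀ x n s, (f x).toFun n = some s → ∃ y ≤ x, y.IsFinite ∧ (f y).toFun n = some s) :
    Continuous f := by
  refine (IsScott.scottContinuousOn_iff_continuous (D := univ) fun _ _ _ => trivial).1 ?_
  rw [scottContinuousOn_univ]
  intro d hne hdir x hx
  refine ⟨hf.mem_upperBounds_image hx.1, fun v hv n s hs => ?_⟩
  obtain ⟨y, hyx, hy, hys⟩ := hfin x n s hs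
  obtain ⟨z, hz, hyz⟩ := exists_mem_le_of_isLUB hne hdir hx hy hyx
  exact hv (mem_image_of_mem f hz) n s (hf hyz n s hys)

end Lgen

namespace Nat

variable {p q : ℕ → Prop} [DecidablePred p] [DecidablePred q]

theorem count_congr {n : ℕ} (h : ∀ j < n, p j ↔ q j) : count p n = count q n := by
  simp only [count_eq_card_filter_range]
  exact congrArg Finset.card (Finset.filter_congr fun j hj => h j (Finset.mem_range.mp hj))

theorem nth_mem_of_lt_count {n i : ℕ} (h : n < count p i) : p (nth p n) :=
  nth_mem n fun hf => h.trans_le (count_le_card hf i)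

theorem count_nth_of_lt_count {n i : ℕ} (h : n < count p i) : count p (nth p n) = n :=
  count_nth fun hf => h.trans_le (count_le_card hf i)

theorem count_eq_of_forall_not_mem_Ico {a b : ℕ} (hab : a ≤ b) (h : ∀ j ∈ Ico a b, ¬p j) :
    count p b = count p a :=
  le_antisymm (not_lt.mp fun hlt =>
    let ⟨j, hj, hpj⟩ := exists_of_count_lt_count hlt; h j hj hpj) (count_monotone p hab)

theorem count_eq_add_of_strictMono {D : ℕ → Prop} {B : ℕ → ℕ} {a : ℕ} (hB : StrictMono B)
    (ha : a ≤ B 0) (hD : ∀ k, D (k + 1) → D k) (hp : ∀ j, a ≤ j → (p j ↔ ∃ k, D k ∧ j = B k))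
    {k : ℕ} (hk : D k) : count p (B k) = count p a + k := by
  induction k with
  | zero =>
    refine count_eq_of_forall_not_mem_Ico ha fun j hj hpj => ?_
    obtain ⟨k, -, rfl⟩ := (hp j (mem_Ico.mp hj).1).mp hpj
    exact (hB.monotone (zero_le k)).not_gt (mem_Ico.mp hj).2
  | succ k ih =>
    have hBk : B k < B (k + 1) := hB (lt_add_one k)
    have hgap : count p (B (k + 1)) = count p (B k + 1) := by
      refine count_eq_of_forall_not_mem_Ico hBk fun j hj hpj => ?_
      obtain ⟨hj₁, hj₂⟩ := mem_Ico.mp hj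
      obtain ⟨m, -, rfl⟩ := (hp j (by have := hB.monotone (zero_le k); omega)).mp hpj
      have := hB.lt_iff_lt.mp (lt_of_lt_of_le (lt_add_one _) hj₁)
      have := hB.lt_iff_lt.mp hj₂
      omega
    have hpk : p (B k) := (hp _ (ha.trans (hB.monotone (zero_le k)))).mpr ⟨k, hD k hk, rfl⟩
    rw [hgap, count_succ_eq_succ_count_iff.mpr hpk, ih (hD k hk), add_assoc]

end Nat

section Decode

open Nat Lgen

variable {σ : Type*}

def FalseAt (x : L2) (i : ℕ) : Prop := x.toFun i = some false

instance (x : L2) : DecidablePred (FalseAt x) := fun i =>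
  inferInstanceAs (Decidable (x.toFun i = some false))

open Classical in
noncomputable def decode (e : ℕ → σ) (x : L2) : Lgen σ where
  toFun n := if ∃ i, n < count (FalseAt x) i then some (e (nth (FalseAt x) n)) else none
  init n hn := by
    obtain ⟨i, hi⟩ : ∃ i, n + 1 < count (FalseAt x) i := by
      by_contra h
      exact hn (if_neg h)
    rw [if_pos ⟨i, by omega⟩]
    exact Option.some_ne_none _

variable {e : ℕ → σ}

theorem decode_toFun_of_lt_count {x : L2} {n i : ℕ} (h : n < count (FalseAt x) i) :
    (decode e x).toFun n = some (e (nth (FalseAt x) n)) :=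
  if_pos ⟨i, h⟩

theorem decode_toFun_count {x : L2} {i : ℕ} (hi : FalseAt x i) :
    (decode e x).toFun (count (FalseAt x) i) = some (e i) := by
  rw [decode_toFun_of_lt_count (count_lt_count_succ_iff.mpr hi), nth_count hi]

theorem decode_toFun_eq_some_iff {x : L2} {n : ℕ} {s : σ} :
    (decode e x).toFun n = some s ↔ ∃ i, FalseAt x i ∧ count (FalseAt x) i = n ∧ e i = s := by
  refine ⟨fun hs => ?_, fun ⟨i, hi, hn, hs⟩ => hn ▸ hs ▸ decode_toFun_count hi⟩
  by_cases h : ∃ i, n < count (FalseAt x) i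
  · obtain ⟨i, hi⟩ := h
    rw [decode_toFun_of_lt_count hi, Option.some_inj] at hs
    exact ⟨_, nth_mem_of_lt_count hi, count_nth_of_lt_count hi, hs⟩
  · simp [decode, h] at hs

theorem decode_toFun_count_of_eqOn {x z : L2} {i : ℕ} (hi : FalseAt x i)
    (hxz : EqOn z.toFun x.toFun (Iic i)) :
    (decode e z).toFun (count (FalseAt x) i) = some (e i) := by
  have hcount : count (FalseAt z) i = count (FalseAt x) i :=
    count_congr fun j hj => by rw [FalseAt, FalseAt, hxz hj.le]
  rw [← hcount]
  exact decode_toFun_count (by rw [FalseAt, hxz self_mem_Iic]; exact hi)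

theorem monotone_decode (e : ℕ → σ) : Monotone (decode e) := fun x z hxz n s hs => by
  obtain ⟨i, hi, rfl, rfl⟩ := decode_toFun_eq_some_iff.mp hs
  exact decode_toFun_count_of_eqOn hi fun j hj =>
    toFun_eq_of_le hxz (toFun_ne_none_of_le hj (by rw [hi]; exact Option.some_ne_none _))

theorem continuous_decode (e : ℕ → σ) : Continuous (decode e) := by
  refine continuous_of_monotone_of_finitary (monotone_decode e) fun x n s hs => ?_
  obtain ⟨i, hi, rfl, rfl⟩ := decode_toFun_eq_some_iff.mp hs
  exact ⟨x.trunc (i + 1), trunc_le x _, isFinite_trunc x _,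
    decode_toFun_count_of_eqOn hi fun j hj => trunc_toFun_of_lt (Nat.lt_succ_of_le hj)⟩

theorem isFinite_decode {y : L2} (hy : y.IsFinite) : (decode e y).IsFinite := by
  obtain ⟨m, hm⟩ := hy
  refine ⟨count (FalseAt y) m, Option.eq_none_iff_forall_ne_some.mpr fun s hs => ?_⟩
  obtain ⟨i, hi, hcount, -⟩ := decode_toFun_eq_some_iff.mp hs
  have him : i < m := by
    by_contra! him
    exact toFun_ne_none_of_le him (by rw [hi]; exact Option.some_ne_none _) hm
  exact (count_strict_mono hi him).ne hcount

open Classical in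
noncomputable def extendFalsesAt (y : L2) (len : ℕ) (P : ℕ → Prop) : L2 :=
  Lgen.ofFun fun j => if j < len then (y.toFun j).getD true else !decide (P j)

section ExtendFalsesAt

variable {y : L2} {len : ℕ} {P : ℕ → Prop}

theorem falseAt_extendFalsesAt_of_lt {j : ℕ} (hj : j < len) :
    FalseAt (extendFalsesAt y len P) j ↔ FalseAt y j := by
  cases h : y.toFun j <;> simp [FalseAt, extendFalsesAt, Lgen.ofFun, hj, h]

theorem falseAt_extendFalsesAt_of_le {j : ℕ} (hj : len ≤ j) :
    FalseAt (extendFalsesAt y len P) j ↔ P j := by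
  simp [FalseAt, extendFalsesAt, Lgen.ofFun, not_lt.mpr hj]

theorem le_extendFalsesAt (hlen : y.toFun len = none) : y ≤ extendFalsesAt y len P :=
  fun j s hs => by
    have hj : j < len := by
      by_contra! hj
      exact Lgen.toFun_ne_none_of_le hj (by rw [hs]; exact Option.some_ne_none _) hlen
    simp [extendFalsesAt, Lgen.ofFun, hj, hs]

end ExtendFalsesAt

theorem exists_le_decode_eq (he : ∀ s, ∃ᶠ k in atTop, e k = s) {y : L2}
    (hy : y.IsFinite) {w : Lgen σ} (hw : decode e y ≤ w) : ∃ z, y ≤ z ∧ decode e z = w := by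
  obtain ⟨len, hlen⟩ := hy
  set c := count (FalseAt y) len
  -- the `false` coding entry `c + k` of `w` goes to `B k`; `e 0` is a dummy for undefined entries
  obtain ⟨B, hB, hBe⟩ : ∃ B : ℕ → ℕ, StrictMono B ∧
      ∀ k, e (B k) = (w.toFun (c + k)).getD (e 0) ∧ len ≤ B k :=
    extraction_forall_of_frequently fun k => (he _).and_eventually (eventually_ge_atTop len)
  set D : ℕ → Prop := fun k => w.toFun (c + k) ≠ none
  set z := extendFalsesAt y len fun j => ∃ k, D k ∧ j = B k
  have hyz : y ≤ z := le_extendFalsesAt hlen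
  have hcount : ∀ k, D k → count (FalseAt z) (B k) = c + k := fun k hk => by
    rw [count_eq_add_of_strictMono hB (hBe 0).2 (fun k => toFun_ne_none_of_le (by omega))
      (fun j hj => falseAt_extendFalsesAt_of_le hj) hk,
      count_congr fun j hj => falseAt_extendFalsesAt_of_lt hj]
  have hzB : ∀ k s, w.toFun (c + k) = some s → (decode e z).toFun (c + k) = some s :=
    fun k s hs => by
      have hk : D k := by simp [D, hs]
      rw [← hcount k hk, decode_toFun_count ((falseAt_extendFalsesAt_of_le (hBe k).2).mpr
        ⟨k, hk, rfl⟩), (hBe k).1, hs, Option.getD_some]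
  refine ⟨z, hyz, le_antisymm (fun n s hs => ?_) (fun n s hs => ?_)⟩
  · obtain ⟨i, hi, rfl, rfl⟩ := decode_toFun_eq_some_iff.mp hs
    by_cases hil : i < len
    · rw [count_congr fun j hj => falseAt_extendFalsesAt_of_lt (hj.trans hil)]
      exact hw _ _ (decode_toFun_count ((falseAt_extendFalsesAt_of_lt hil).mp hi))
    · obtain ⟨k, hk, rfl⟩ := (falseAt_extendFalsesAt_of_le (not_lt.mp hil)).mp hi
      obtain ⟨s, hs⟩ := Option.ne_none_iff_exists'.mp hk
      rw [hcount k hk, hs, (hBe k).1, hs, Option.getD_some]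
  · by_cases hn : n < c
    · have hyn := decode_toFun_of_lt_count (e := e) hn
      rw [hw n _ hyn, Option.some_inj] at hs
      exact hs ▸ monotone_decode e hyz n _ hyn
    · obtain ⟨k, rfl⟩ := Nat.exists_eq_add_of_le (not_lt.mp hn)
      exact hzB k s hs

theorem image_decode_Ici (he : ∀ s, ∃ᶠ k in atTop, e k = s) {y : L2}
    (hy : y.IsFinite) : decode e '' Ici y = Ici (decode e y) := by
  refine Subset.antisymm (image_subset_iff.mpr fun z hz => monotone_decode e hz) fun w hw => ?_
  obtain ⟨z, hyz, rfl⟩ := exists_le_decode_eq he hy hw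
  exact mem_image_of_mem _ hyz

theorem isOpenMap_decode (he : ∀ s, ∃ᶠ k in atTop, e k = s) :
    IsOpenMap (decode e) := by
  refine isTopologicalBasis_Ici.isOpenMap_iff.mpr ?_
  rintro _ ⟨y, hy, rfl⟩
  rw [image_decode_Ici he hy]
  exact isOpen_Ici (isFinite_decode hy)

theorem surjective_decode (he : ∀ s, ∃ᶠ k in atTop, e k = s) :
    Function.Surjective (decode e) := fun w => by
  have hnil : decode e (Lgen.ofList []) ≤ w := fun n s hs => by
    obtain ⟨i, hi, -⟩ := decode_toFun_eq_some_iff.mp hs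
    simp [FalseAt, Lgen.ofList] at hi
  obtain ⟨z, -, hz⟩ := exists_le_decode_eq he (isFinite_ofList []) hnil
  exact ⟨z, hz⟩

end Decode

theorem exists_seq_frequently_eq (σ : Type*) [Countable σ] [Nonempty σ] :
    ∃ e : ℕ → σ, ∀ s, ∃ᶠ k in atTop, e k = s := by
  obtain ⟨g, hg⟩ := exists_surjective_nat σ
  refine ⟨fun k => g k.unpair.1, fun s => frequently_atTop.mpr fun m => ?_⟩
  obtain ⟨a, rfl⟩ := hg s
  exact ⟨Nat.pair a m, Nat.right_le_pair a m, by simp⟩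

/-- For every nonempty countable `σ`, the space `𝐋_σ` is an interior image
of `𝐋₂`: there is a surjective map from `L₂` onto `L_σ` that is continuous and open with
respect to the Scott topologies. -/
theorem statement10 (σ : Type*) [Countable σ] [Nonempty σ] :
    ∃ f : L2 → Lgen σ, Function.Surjective f ∧ Continuous f ∧ IsOpenMap f := by
  obtain ⟨e, he⟩ := exists_seq_frequently_eq σ
  exact ⟨decode e, surjective_decode he, continuous_decode e, isOpenMap_decode he⟩
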